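/- Let A ∈ ℝ^{n×n} be SPD, M ∈ ℝ^{n×n} nonsingular with M + Mᵀ − A SPD, and P ∈ ℝ^{n×n_c} of full column rank. With M̄ := M(M+Mᵀ−A)^{-1}Mᵀ, M̃ := Mᵀ(M+Mᵀ−A)^{-1}M, A_c := PᵀAP, Π_M̃ := P(PᵀM̃P)^{-1}PᵀM̃, and B_TG the SPD matrix defined by B_TG^{-1} = M̄^{-1} + (I−M^{-T}A)P A_c^{-1} Pᵀ(I−AM^{-1}), it holds that B_TG = A + (I−AM^{-T}) M̃ (I − Π_M̃)(I − M^{-1}A). -/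

import Mathlib

/-!
With `N = M + Mᵀ - A`, the smoothers `M̄ = M N⁻¹ Mᵀ` and `M̃ = Mᵀ N⁻¹ M` are invertible, and
substituting `A = M + Mᵀ - N` turns the needed relations between `M̄`, `M̃` and the smoothing
operators `I - M⁻¹A`, `I - M⁻ᵀA` into ring identities. With `U = (I - M⁻ᵀA) P` and
`V = Pᵀ M̃ (I - M⁻¹A)` they give
`B_TG⁻¹ = (I + U A_c⁻¹ V) M̄⁻¹`, `A + (I - AM⁻ᵀ) M̃ (I - Π_M̃) (I - M⁻¹A) = M̄ (I - U (PᵀM̃P)⁻¹ V)`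
and `V U = PᵀM̃P - A_c`; the last makes `(I - U (PᵀM̃P)⁻¹ V) (I + U A_c⁻¹ V) = I`, a
Woodbury-type cancellation.
-/

open Matrix

section SymmSmoother

variable {R : Type*} [Ring R] (m u n : Rˣ) {a : R}

/-- With `u = mᵀ` and `n = m + mᵀ - a`, `symmSmoother m u n` is `M̄` and `symmSmoother u m n`
is `M̃`. -/
def symmSmoother : Rˣ := m * n⁻¹ * u

theorem symmSmoother_mul_one_sub (ha : a = m + u - n) :
    symmSmoother m u n * (1 - ↑u⁻¹ * a) = (1 - a * ↑u⁻¹) * symmSmoother u m n := by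
  subst ha
  simp only [symmSmoother, Units.val_mul, mul_sub, sub_mul, mul_add, add_mul, mul_one, one_mul,
    mul_assoc, Units.mul_inv_cancel_left, Units.inv_mul_cancel_left, Units.mul_inv, Units.inv_mul]
  abel

theorem symmSmoother_mul_one_sub_mul_inv (ha : a = m + u - n) :
    symmSmoother u m n * (1 - ↑m⁻¹ * a) * ↑(symmSmoother m u n)⁻¹ = 1 - a * ↑m⁻¹ := by
  subst ha
  simp only [symmSmoother, _root_.mul_inv_rev, inv_inv, Units.val_mul, mul_sub, sub_mul, mul_add,
    add_mul, mul_one, mul_assoc, Units.mul_inv_cancel_left, Units.inv_mul_cancel_left,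
    Units.mul_inv, Units.inv_mul]
  abel

theorem symmSmoother_mul_one_sub_mul_one_sub (ha : a = m + u - n) :
    symmSmoother u m n * (1 - ↑m⁻¹ * a) * (1 - ↑u⁻¹ * a) = symmSmoother u m n - a := by
  subst ha
  simp only [symmSmoother, Units.val_mul, mul_sub, sub_mul, mul_add, add_mul, mul_one, mul_assoc,
    Units.mul_inv_cancel_left, Units.inv_mul]
  abel

theorem add_one_sub_mul_symmSmoother_mul_one_sub (ha : a = m + u - n) :
    a + (1 - a * ↑u⁻¹) * symmSmoother u m n * (1 - ↑m⁻¹ * a) = symmSmoother m u n := by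
  subst ha
  simp only [symmSmoother, Units.val_mul, mul_sub, sub_mul, mul_add, add_mul, mul_one, one_mul,
    mul_assoc, Units.mul_inv_cancel_left, Units.inv_mul_cancel_left, Units.mul_inv, Units.inv_mul]
  abel

end SymmSmoother

namespace Matrix

theorem one_sub_mul_mul_one_add_mul_eq_one {R m k : Type*} [Ring R] [Fintype m] [Fintype k]
    [DecidableEq m] [DecidableEq k] (U : Matrix m k R) (V : Matrix k m R) {S S' T T' : Matrix k k R}
    (hS : S' * S = 1) (hT : T * T' = 1) (hVU : V * U = S - T) :
    (1 - U * S' * V) * (1 + U * T' * V) = 1 := by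
  have hS' : ∀ X : Matrix k m R, S' * (S * X) = X := fun X => by
    rw [← Matrix.mul_assoc, hS, Matrix.one_mul]
  have hT' : ∀ X : Matrix k m R, T * (T' * X) = X := fun X => by
    rw [← Matrix.mul_assoc, hT, Matrix.one_mul]
  calc (1 - U * S' * V) * (1 + U * T' * V)
      = 1 + U * T' * V - U * S' * V - U * S' * (V * U) * T' * V := by
        simp only [Matrix.sub_mul, Matrix.mul_add, Matrix.one_mul, Matrix.mul_one, Matrix.mul_assoc]
        abel
    _ = 1 := by
        rw [hVU]
        simp only [Matrix.mul_sub, Matrix.sub_mul, Matrix.mul_assoc, hS', hT']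
        abel

theorem mulVec_injective_of_rank_eq_card {K m n : Type*} [Field K] [Fintype m] [Fintype n]
    {P : Matrix m n K} (hP : P.rank = Fintype.card n) : Function.Injective P.mulVec :=
  mulVec_injective_iff.2 <| linearIndependent_iff_card_eq_finrank_span.2 <| by
    rw [← hP, rank_eq_finrank_span_cols]; rfl

theorem eq_of_mul_nonsing_inv_eq_one {K n : Type*} [Field K] [Fintype n] [DecidableEq n]
    {A B : Matrix n n K} (h : A * B⁻¹ = 1) : B = A := by
  have hB : IsUnit B.det := isUnit_nonsing_inv_det_iff.mp (isUnit_det_of_left_inverse h)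
  rw [← inv_eq_left_inv h, nonsing_inv_nonsing_inv B hB]

theorem twoGrid_mul_inv_eq_one {K ι κ : Type*} [CommRing K] [Fintype ι] [DecidableEq ι]
    [Fintype κ] [DecidableEq κ] {A M Mt Mbar Mtil : Matrix ι ι K} (P : Matrix ι κ K)
    (R : Matrix κ ι K) (hM : IsUnit M) (hMt : IsUnit Mt) (hN : IsUnit (M + Mt - A))
    (hMbar : Mbar = M * (M + Mt - A)⁻¹ * Mt) (hMtil : Mtil = Mt * (M + Mt - A)⁻¹ * M)
    (hS : IsUnit (R * Mtil * P)) (hAc : IsUnit (R * A * P)) :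
    (A + (1 - A * Mt⁻¹) * Mtil * (1 - P * (R * Mtil * P)⁻¹ * R * Mtil) * (1 - M⁻¹ * A)) *
      (Mbar⁻¹ + (1 - Mt⁻¹ * A) * P * (R * A * P)⁻¹ * R * (1 - A * M⁻¹)) = 1 := by
  obtain ⟨m, hm⟩ := hM
  obtain ⟨u, hu⟩ := hMt
  obtain ⟨n, hN⟩ := hN
  have ha : A = m + u - n := by rw [hN, hm, hu]; abel
  have hMbar' : ↑(symmSmoother m u n) = Mbar := by
    rw [hMbar, symmSmoother, Units.val_mul, Units.val_mul, coe_units_inv, hm, hu, hN]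
  have hMtil' : ↑(symmSmoother u m n) = Mtil := by
    rw [hMtil, symmSmoother, Units.val_mul, Units.val_mul, coe_units_inv, hm, hu, hN]
  set S := R * Mtil * P
  set U := (1 - Mt⁻¹ * A) * P
  set V := R * Mtil * (1 - M⁻¹ * A)
  have hVU : V * U = S - R * A * P := by
    have h3 := symmSmoother_mul_one_sub_mul_one_sub m u n ha
    simp only [coe_units_inv, hm, hu, hMtil'] at h3
    simp only [V, U, S, ← Matrix.mul_sub, ← Matrix.sub_mul, ← h3, Matrix.mul_assoc]
  have hRHS : A + (1 - A * Mt⁻¹) * Mtil * (1 - P * S⁻¹ * R * Mtil) * (1 - M⁻¹ * A) =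
      Mbar * (1 - U * S⁻¹ * V) := by
    have h1 := symmSmoother_mul_one_sub m u n ha
    have h4 := add_one_sub_mul_symmSmoother_mul_one_sub m u n ha
    simp only [coe_units_inv, hm, hu, hMbar', hMtil'] at h1 h4
    calc A + (1 - A * Mt⁻¹) * Mtil * (1 - P * S⁻¹ * R * Mtil) * (1 - M⁻¹ * A)
        = A + (1 - A * Mt⁻¹) * Mtil * (1 - M⁻¹ * A)
          - (1 - A * Mt⁻¹) * Mtil * (P * S⁻¹ * R * Mtil) * (1 - M⁻¹ * A) := by
          simp only [Matrix.mul_sub, Matrix.sub_mul, Matrix.mul_one]; abel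
      _ = Mbar - Mbar * (U * S⁻¹ * V) := by
          rw [h4, ← h1]; simp only [U, V, Matrix.mul_assoc]
      _ = Mbar * (1 - U * S⁻¹ * V) := by rw [Matrix.mul_sub, Matrix.mul_one]
  have hInv : Mbar⁻¹ + U * (R * A * P)⁻¹ * R * (1 - A * M⁻¹) =
      (1 + U * (R * A * P)⁻¹ * V) * Mbar⁻¹ := by
    have h2 := symmSmoother_mul_one_sub_mul_inv m u n ha
    simp only [coe_units_inv, hm, hMbar', hMtil', Matrix.mul_assoc] at h2
    simp only [V, Matrix.add_mul, Matrix.one_mul, Matrix.mul_assoc, h2]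
  rw [hRHS, hInv, Matrix.mul_assoc, ← Matrix.mul_assoc (1 - _),
    one_sub_mul_mul_one_add_mul_eq_one U V (nonsing_inv_mul _ ((isUnit_iff_isUnit_det _).1 hS))
      (mul_nonsing_inv _ ((isUnit_iff_isUnit_det _).1 hAc)) hVU,
    Matrix.one_mul, ← hMbar', ← coe_units_inv, Units.mul_inv]

end Matrix

theorem stmt_1_general {n nc : ℕ}
    (A M : Matrix (Fin n) (Fin n) ℝ)
    (P : Matrix (Fin n) (Fin nc) ℝ)
    (hA : A.PosDef) (hM : IsUnit M.det)
    (hMMA : (M + Mᵀ - A).PosDef)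
    (hP : P.rank = nc)
    (Mbar Mtil : Matrix (Fin n) (Fin n) ℝ)
    (hMbar : Mbar = M * (M + Mᵀ - A)⁻¹ * Mᵀ)
    (hMtil : Mtil = Mᵀ * (M + Mᵀ - A)⁻¹ * M)
    (Ac : Matrix (Fin nc) (Fin nc) ℝ) (hAc : Ac = Pᵀ * A * P)
    (Pi : Matrix (Fin n) (Fin n) ℝ) (hPi : Pi = P * (Pᵀ * Mtil * P)⁻¹ * Pᵀ * Mtil)
    (BTG : Matrix (Fin n) (Fin n) ℝ)
    (hBTGinv : BTG⁻¹ = Mbar⁻¹ + (1 - Mᵀ⁻¹ * A) * P * Ac⁻¹ * Pᵀ * (1 - A * M⁻¹)) :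
    BTG = A + (1 - A * Mᵀ⁻¹) * Mtil * (1 - Pi) * (1 - M⁻¹ * A) := by
  have hPinj : Function.Injective P.mulVec := mulVec_injective_of_rank_eq_card (by simpa using hP)
  have hM' : IsUnit M := (isUnit_iff_isUnit_det M).2 hM
  have hMtil_pd : Mtil.PosDef := by
    rw [hMtil]
    simpa using hMMA.inv.conjTranspose_mul_mul_same (mulVec_injective_iff_isUnit.2 hM')
  apply eq_of_mul_nonsing_inv_eq_one
  rw [hBTGinv, hPi, hAc]
  exact twoGrid_mul_inv_eq_one P Pᵀ hM' ((isUnit_transpose M).2 hM') hMMA.isUnit hMbar hMtil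
    (by simpa using (hMtil_pd.conjTranspose_mul_mul_same hPinj).isUnit)
    (by simpa using (hA.conjTranspose_mul_mul_same hPinj).isUnit)

theorem stmt_1 {n nc : ℕ} (hnc : nc < n)
    (A M : Matrix (Fin n) (Fin n) ℝ)
    (P : Matrix (Fin n) (Fin nc) ℝ)
    (hA : A.PosDef) (hM : IsUnit M.det)
    (hMMA : (M + Mᵀ - A).PosDef)
    (hP : P.rank = nc)
    (Mbar Mtil : Matrix (Fin n) (Fin n) ℝ)
    (hMbar : Mbar = M * (M + Mᵀ - A)⁻¹ * Mᵀ)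
    (hMtil : Mtil = Mᵀ * (M + Mᵀ - A)⁻¹ * M)
    (Ac : Matrix (Fin nc) (Fin nc) ℝ) (hAc : Ac = Pᵀ * A * P)
    (Pi : Matrix (Fin n) (Fin n) ℝ) (hPi : Pi = P * (Pᵀ * Mtil * P)⁻¹ * Pᵀ * Mtil)
    (BTG : Matrix (Fin n) (Fin n) ℝ) (hBTG : BTG.PosDef)
    (hBTGinv : BTG⁻¹ = Mbar⁻¹ + (1 - Mᵀ⁻¹ * A) * P * Ac⁻¹ * Pᵀ * (1 - A * M⁻¹)) :
    BTG = A + (1 - A * Mᵀ⁻¹) * Mtil * (1 - Pi) * (1 - M⁻¹ * A) :=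
  stmt_1_general A M P hA hM hMMA hP Mbar Mtil hMbar hMtil Ac hAc Pi hPi BTG hBTGinv
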